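/- arXiv:2002.02016 — 2 statements merged into one kernel-verified Lean document; each statement's English description precedes it below -/
import Mathlib

section
/- (Grönwall-type lemma) Let C₁, C₂ > 0, let ψ, Θ : [0,∞) → [0,∞), and let φ : [0,∞) → [0,∞) be continuous with φ(0) = 0. Assume that for all t > 0, the upper-left-derivative of φ satisfies D⁻φ(t) ≤ C₁ φ(t) + C₂ + Θ(t)·𝟙{φ(t) < ψ(t)}. Then for any T > 0, sup_{t ∈ [0,T]} φ(t) ≤ (C₂ T + sup_{t ∈ [0,T]} ψ(t)) · e^{C₁ T}. -/
/-! For `K > sup ψ` compare `φ` with `w(t) = (C₂ t + K) e^{C₁ t}`, which satisfies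
`w' = C₁ w + C₂ e^{C₁ t} > C₁ w + C₂` for `t > 0` and `w(0) = K > φ(0)`. At the first time `t₀`
where `φ` reaches `w`, `φ ≤ w` on the left with equality at `t₀` forces `w'(t₀) ≤ D⁻φ(t₀)`. But
there `φ(t₀) = w(t₀) ≥ K > ψ(t₀)`, so the indicator vanishes and `D⁻φ(t₀) ≤ C₁ w(t₀) + C₂ < w'(t₀)`.
Hence `φ < w ≤ w(T)` on `[0, T]`, and it remains to let `K ↓ sup ψ`. -/

open Filter

/-- The upper-left-derivative `D⁻φ(t) = limsup_{h ↓ 0} (φ(t) - φ(t-h))/h`, valued in `EReal`. -/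
noncomputable def upperLeftDeriv (φ : ℝ → ℝ) (t : ℝ) : EReal :=
  Filter.limsup (fun h : ℝ => (((φ t - φ (t - h)) / h : ℝ) : EReal)) (nhdsWithin 0 (Set.Ioi 0))

open Set Topology

lemma tendsto_sub_nhdsGT_zero (t : ℝ) : Tendsto (fun h : ℝ => t - h) (𝓝[>] 0) (𝓝[<] t) := by
  refine tendsto_nhdsWithin_of_tendsto_nhds_of_eventually_within _ ?_ ?_
  · simpa using ((continuous_sub_left t).tendsto 0).mono_left nhdsWithin_le_nhds
  · filter_upwards [self_mem_nhdsWithin] with h (hh : 0 < h)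
    simpa using hh

lemma HasDerivAt.tendsto_leftSlope {w : ℝ → ℝ} {w' t : ℝ} (hw : HasDerivAt w w' t) :
    Tendsto (fun h => (w t - w (t - h)) / h) (𝓝[>] 0) (𝓝 w') := by
  refine ((hasDerivAt_iff_tendsto_slope.1 hw).comp
    ((tendsto_sub_nhdsGT_zero t).mono_right (nhdsLT_le_nhdsNE t))).congr fun h => ?_
  rw [Function.comp_apply, slope_def_field, sub_sub_cancel_left, div_neg, ← neg_div, neg_sub]

lemma HasDerivAt.upperLeftDeriv_eq {w : ℝ → ℝ} {w' t : ℝ} (hw : HasDerivAt w w' t) :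
    upperLeftDeriv w t = w' :=
  (EReal.tendsto_coe.2 hw.tendsto_leftSlope).limsup_eq

lemma upperLeftDeriv_le_of_touch {φ w : ℝ → ℝ} {t : ℝ} (ht : w t ≤ φ t)
    (hle : ∀ᶠ s in 𝓝[<] t, φ s ≤ w s) : upperLeftDeriv w t ≤ upperLeftDeriv φ t := by
  refine limsup_le_limsup ?_
  filter_upwards [self_mem_nhdsWithin, (tendsto_sub_nhdsGT_zero t).eventually hle]
    with h (hh : 0 < h) hφw
  exact EReal.coe_le_coe_iff.2 (div_le_div_of_nonneg_right (by linarith) hh.le)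

lemma exists_first_touch {φ w : ℝ → ℝ} {a b : ℝ} (hφ : ContinuousOn φ (Icc a b))
    (hw : ContinuousOn w (Icc a b)) (ha : φ a < w a) (hb : ∃ t ∈ Icc a b, w t ≤ φ t) :
    ∃ t ∈ Ioc a b, φ t = w t ∧ ∀ s ∈ Ico a t, φ s < w s := by
  set S := {t ∈ Icc a b | w t ≤ φ t}
  have hS : IsClosed S := isClosed_Icc.isClosed_le hw hφ
  have hSbdd : BddBelow S := ⟨a, fun s hs => hs.1.1⟩
  obtain ⟨⟨hat, htb⟩, hwt⟩ : sInf S ∈ S := hS.csInf_mem hb hSbdd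
  have hbefore : ∀ s ∈ Ico a (sInf S), φ s < w s := fun s hs =>
    not_le.1 fun hws => (csInf_le hSbdd ⟨⟨hs.1, hs.2.le.trans htb⟩, hws⟩).not_gt hs.2
  have hat' : a < sInf S := hat.lt_of_ne fun h => (h ▸ hwt).not_gt ha
  have hle : sInf S ∈ {s ∈ Icc a b | φ s ≤ w s} := by
    refine ((isClosed_Icc.isClosed_le hφ hw).closure_subset_iff (s := Ico a (sInf S))).2
      (fun s hs => ?_) ?_
    · exact ⟨⟨hs.1, hs.2.le.trans htb⟩, (hbefore s hs).le⟩
    · rw [closure_Ico hat'.ne]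
      exact ⟨hat, le_rfl⟩
  exact ⟨sInf S, ⟨hat', htb⟩, le_antisymm hle.2 hwt, hbefore⟩

theorem lt_of_upperLeftDeriv_lt {φ w w' : ℝ → ℝ} {a b : ℝ} (hφ : ContinuousOn φ (Icc a b))
    (hwc : ContinuousOn w (Icc a b)) (hw : ∀ t ∈ Ioc a b, HasDerivAt w (w' t) t)
    (ha : φ a < w a) (hD : ∀ t ∈ Ioc a b, φ t = w t → upperLeftDeriv φ t < w' t) :
    ∀ t ∈ Icc a b, φ t < w t := by
  by_contra! hb
  obtain ⟨t, ht, hφw, hbefore⟩ := exists_first_touch hφ hwc ha hb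
  have hleft : ∀ᶠ s in 𝓝[<] t, φ s ≤ w s := by
    filter_upwards [Ioo_mem_nhdsLT ht.1] with s hs using (hbefore s (Ioo_subset_Ico_self hs)).le
  have := upperLeftDeriv_le_of_touch hφw.ge hleft
  rw [(hw t ht).upperLeftDeriv_eq] at this
  exact (hD t ht hφw).not_ge this

lemma hasDerivAt_linear_mul_exp (C₁ C₂ K t : ℝ) :
    HasDerivAt (fun s => (C₂ * s + K) * Real.exp (C₁ * s))
      (C₂ * Real.exp (C₁ * t) + C₁ * ((C₂ * t + K) * Real.exp (C₁ * t))) t := by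
  have hlin : HasDerivAt (fun s => C₂ * s + K) C₂ t := by
    simpa using ((hasDerivAt_id t).const_mul C₂).add_const K
  have hexp : HasDerivAt (fun s => Real.exp (C₁ * s)) (Real.exp (C₁ * t) * C₁) t := by
    simpa using ((hasDerivAt_id t).const_mul C₁).exp
  exact (hlin.mul hexp).congr_deriv (by ring)

theorem lt_linear_mul_exp_of_upperLeftDeriv_le {C₁ C₂ K T : ℝ} {ψ Θ φ : ℝ → ℝ}
    (hC₁ : 0 < C₁) (hC₂ : 0 < C₂) (hK : 0 ≤ K) (hφc : ContinuousOn φ (Icc 0 T))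
    (hφ0 : φ 0 < K) (hψK : ∀ t ∈ Ioc 0 T, ψ t < K)
    (hD : ∀ t ∈ Ioc 0 T, upperLeftDeriv φ t ≤
        ((C₁ * φ t + C₂ + (if φ t < ψ t then Θ t else 0) : ℝ) : EReal)) :
    ∀ t ∈ Icc 0 T, φ t < (C₂ * t + K) * Real.exp (C₁ * t) := by
  refine lt_of_upperLeftDeriv_lt hφc (by fun_prop) (fun t _ => hasDerivAt_linear_mul_exp C₁ C₂ K t)
    (by simpa using hφ0) fun t ht hφw => ?_
  have hexp : 1 < Real.exp (C₁ * t) := Real.one_lt_exp_iff.2 (mul_pos hC₁ ht.1)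
  have hKw : K ≤ φ t := by
    rw [hφw]
    calc K ≤ C₂ * t + K := le_add_of_nonneg_left (mul_pos hC₂ ht.1).le
      _ ≤ (C₂ * t + K) * Real.exp (C₁ * t) :=
        le_mul_of_one_le_right (add_nonneg (mul_pos hC₂ ht.1).le hK) hexp.le
  have hind : ¬ φ t < ψ t := fun h => (hψK t ht).not_ge (hKw.trans h.le)
  refine (hD t ht).trans_lt ?_
  rw [if_neg hind, add_zero, EReal.coe_lt_coe_iff, hφw]
  nlinarith [lt_mul_of_one_lt_right hC₂ hexp]

theorem stmt2_general (C₁ C₂ : ℝ) (hC₁ : 0 < C₁) (hC₂ : 0 < C₂)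
    (ψ Θ φ : ℝ → ℝ) (hψ : ∀ t, 0 ≤ t → 0 ≤ ψ t)
    (hφc : ContinuousOn φ (Set.Ici 0)) (hφ0 : φ 0 = 0)
    (hD : ∀ t : ℝ, 0 < t →
      upperLeftDeriv φ t ≤
        ((C₁ * φ t + C₂ + (if φ t < ψ t then Θ t else 0) : ℝ) : EReal))
    (T : ℝ) (hψb : BddAbove (ψ '' Set.Icc 0 T)) :
    ∀ t ∈ Set.Icc (0 : ℝ) T,
      φ t ≤ (C₂ * T + sSup (ψ '' Set.Icc 0 T)) * Real.exp (C₁ * T) := by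
  intro t ht
  set M := sSup (ψ '' Set.Icc 0 T)
  have hψM : ∀ s ∈ Icc 0 T, ψ s ≤ M := fun s hs => le_csSup hψb ⟨s, hs, rfl⟩
  have hM : 0 ≤ M := (hψ 0 le_rfl).trans (hψM 0 ⟨le_rfl, ht.1.trans ht.2⟩)
  have hbound : ∀ K > M, φ t ≤ (C₂ * T + K) * Real.exp (C₁ * T) := fun K hK =>
    calc φ t ≤ (C₂ * t + K) * Real.exp (C₁ * t) :=
          (lt_linear_mul_exp_of_upperLeftDeriv_le hC₁ hC₂ (hM.trans hK.le)
            (hφc.mono Icc_subset_Ici_self) (by rw [hφ0]; exact hM.trans_lt hK)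
            (fun s hs => (hψM s (Ioc_subset_Icc_self hs)).trans_lt hK)
            (fun s hs => hD s hs.1) t ht).le
      _ ≤ (C₂ * T + K) * Real.exp (C₁ * T) := by
          gcongr
          · exact add_nonneg (mul_nonneg hC₂.le (ht.1.trans ht.2)) (hM.trans hK.le)
          all_goals exact ht.2
  have hcont : Continuous fun K => (C₂ * T + K) * Real.exp (C₁ * T) := by fun_prop
  exact ge_of_tendsto (hcont.continuousWithinAt (s := Ioi M) (x := M))
    (eventually_nhdsWithin_of_forall hbound)

theorem stmt2 (C₁ C₂ : ℝ) (hC₁ : 0 < C₁) (hC₂ : 0 < C₂)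
    (ψ Θ φ : ℝ → ℝ) (hψ : ∀ t, 0 ≤ t → 0 ≤ ψ t) (hΘ : ∀ t, 0 ≤ t → 0 ≤ Θ t)
    (hφ : ∀ t, 0 ≤ t → 0 ≤ φ t) (hφc : ContinuousOn φ (Set.Ici 0)) (hφ0 : φ 0 = 0)
    (hD : ∀ t : ℝ, 0 < t →
      upperLeftDeriv φ t ≤
        ((C₁ * φ t + C₂ + (if φ t < ψ t then Θ t else 0) : ℝ) : EReal))
    (T : ℝ) (hT : 0 < T) (hψb : BddAbove (ψ '' Set.Icc 0 T)) :
    ∀ t ∈ Set.Icc (0 : ℝ) T,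
      φ t ≤ (C₂ * T + sSup (ψ '' Set.Icc 0 T)) * Real.exp (C₁ * T) :=
  stmt2_general C₁ C₂ hC₁ hC₂ ψ Θ φ hψ hφc hφ0 hD T hψb
end

section
/- Let f satisfy the one-sided Lipschitz condition f(u₂) - f(u₁) ≤ κ(u₂-u₁) for u₁ < u₂, set φ(u) = f(u) - κu (non-increasing), and define f_n(u) = φ_n(u) + κu where φ_n are the Yosida approximations of φ. Then each f_n is Lipschitz with constant 2n + |κ|, each f_n satisfies the same one-sided Lipschitz condition f_n(u₂) - f_n(u₁) ≤ κ(u₂-u₁) for u₁ < u₂, f_n(u) → f(u) pointwise, and |f_n(u)| ≤ |f(u)| + 2|κ||u| for all u. -/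
section LinearPerturbation

variable {φ : ℝ → ℝ} (κ : ℝ)

lemma abs_add_mul_sub_add_mul_le {L : ℝ} (hφ : ∀ x y, |φ y - φ x| ≤ L * |y - x|) (x y : ℝ) :
    |(φ x + κ * x) - (φ y + κ * y)| ≤ (L + |κ|) * |x - y| :=
  calc |(φ x + κ * x) - (φ y + κ * y)| = |(φ x - φ y) + κ * (x - y)| := by ring_nf
    _ ≤ |φ x - φ y| + |κ| * |x - y| := by rw [← abs_mul]; exact abs_add_le _ _
    _ ≤ L * |x - y| + |κ| * |x - y| := by gcongr; exact hφ y x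
    _ = (L + |κ|) * |x - y| := by ring

lemma Antitone.add_mul_sub_le (hφ : Antitone φ) {x y : ℝ} (hxy : x ≤ y) :
    (φ y + κ * y) - (φ x + κ * x) ≤ κ * (y - x) := by
  linarith [hφ hxy]

lemma abs_add_mul_le_of_abs_le {g : ℝ → ℝ} {u : ℝ} (h : |φ u| ≤ |g u - κ * u|) :
    |φ u + κ * u| ≤ |g u| + 2 * |κ| * |u| :=
  calc |φ u + κ * u| ≤ |φ u| + |κ * u| := abs_add_le _ _
    _ ≤ (|g u| + |κ * u|) + |κ * u| := by gcongr; exact h.trans (abs_sub _ _)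
    _ = |g u| + 2 * |κ| * |u| := by rw [abs_mul]; ring

end LinearPerturbation

theorem stmt17_general (f : ℝ → ℝ) (κ : ℝ)
    (φn : ℕ → ℝ → ℝ)
    (hlip : ∀ (n : ℕ) (u₁ u₂ : ℝ), |φn n u₂ - φn n u₁| ≤ 2 * n * |u₂ - u₁|)
    (hanti : ∀ n : ℕ, Antitone (φn n))
    (hlim : ∀ u : ℝ, Filter.Tendsto (fun n : ℕ => φn n u) Filter.atTop
      (nhds (f u - κ * u)))
    (hbd : ∀ (n : ℕ) (u : ℝ), |φn n u| ≤ |f u - κ * u|)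
    (fn : ℕ → ℝ → ℝ) (hfn : ∀ (n : ℕ) (u : ℝ), fn n u = φn n u + κ * u) :
    (∀ (n : ℕ) (u₁ u₂ : ℝ), |fn n u₁ - fn n u₂| ≤ (2 * n + |κ|) * |u₁ - u₂|) ∧
    (∀ (n : ℕ) (u₁ u₂ : ℝ), u₁ < u₂ → fn n u₂ - fn n u₁ ≤ κ * (u₂ - u₁)) ∧
    (∀ u : ℝ, Filter.Tendsto (fun n : ℕ => fn n u) Filter.atTop (nhds (f u))) ∧
    (∀ (n : ℕ) (u : ℝ), |fn n u| ≤ |f u| + 2 * |κ| * |u|) := by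
  obtain rfl : fn = fun n u => φn n u + κ * u := funext₂ hfn
  refine ⟨fun n => abs_add_mul_sub_add_mul_le κ (hlip n),
    fun n _ _ h => (hanti n).add_mul_sub_le κ h.le, fun u => ?_,
    fun n u => abs_add_mul_le_of_abs_le κ (hbd n u)⟩
  simpa using (hlim u).add_const (κ * u)

theorem stmt17 (f : ℝ → ℝ) (κ : ℝ) (hf : Continuous f)
    (hone : ∀ u₁ u₂ : ℝ, u₁ < u₂ → f u₂ - f u₁ ≤ κ * (u₂ - u₁))
    (φn : ℕ → ℝ → ℝ)
    (hlip : ∀ (n : ℕ) (u₁ u₂ : ℝ), |φn n u₂ - φn n u₁| ≤ 2 * n * |u₂ - u₁|)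
    (hanti : ∀ n : ℕ, Antitone (φn n))
    (hlim : ∀ u : ℝ, Filter.Tendsto (fun n : ℕ => φn n u) Filter.atTop
      (nhds (f u - κ * u)))
    (hbd : ∀ (n : ℕ) (u : ℝ), |φn n u| ≤ |f u - κ * u|)
    (fn : ℕ → ℝ → ℝ) (hfn : ∀ (n : ℕ) (u : ℝ), fn n u = φn n u + κ * u) :
    (∀ (n : ℕ) (u₁ u₂ : ℝ), |fn n u₁ - fn n u₂| ≤ (2 * n + |κ|) * |u₁ - u₂|) ∧
    (∀ (n : ℕ) (u₁ u₂ : ℝ), u₁ < u₂ → fn n u₂ - fn n u₁ ≤ κ * (u₂ - u₁)) ∧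
    (∀ u : ℝ, Filter.Tendsto (fun n : ℕ => fn n u) Filter.atTop (nhds (f u))) ∧
    (∀ (n : ℕ) (u : ℝ), |fn n u| ≤ |f u| + 2 * |κ| * |u|) :=
  stmt17_general f κ φn hlip hanti hlim hbd fn hfn
end
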